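/- Let V be a unital algebra with algebra map Δ: V → V⊗V and invertible R ∈ V⊗V satisfying Δ^{op}(v) = R·Δ(v)·R⁻¹ for all v and the triangularity R₂₁·R = 1. If Φ ∈ V^{⊗3} is invertible, satisfies the first hexagon identity (Δ⊗1)(R) = Φ₃₁₂·R₁₃·Φ₁₃₂⁻¹·R₂₃·Φ, then the second hexagon identity (1⊗Δ)(R) = Φ₂₃₁⁻¹·R₁₃·Φ₂₁₃·R₁₂·Φ⁻¹ holds. -/

import Mathlib

open scoped TensorProduct

noncomputable section

variable (k V : Type*) [Field k] [Ring V] [Algebra k V]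

/-- Swap of the first two tensor factors of `V^⊗3`: `a⊗b⊗c ↦ b⊗a⊗c`. -/
def swap12 : V ⊗[k] (V ⊗[k] V) ≃ₐ[k] V ⊗[k] (V ⊗[k] V) :=
  ((Algebra.TensorProduct.assoc k k k V V V).symm.trans
    (Algebra.TensorProduct.congr (Algebra.TensorProduct.comm k V V) AlgEquiv.refl)).trans
    (Algebra.TensorProduct.assoc k k k V V V)

/-- Swap of the last two tensor factors of `V^⊗3`: `a⊗b⊗c ↦ a⊗c⊗b`. -/
def swap23 : V ⊗[k] (V ⊗[k] V) ≃ₐ[k] V ⊗[k] (V ⊗[k] V) :=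
  Algebra.TensorProduct.congr AlgEquiv.refl (Algebra.TensorProduct.comm k V V)

/-- `X ↦ X₂₁₃` (component `j` of `X` is put in slot `i_j`): `a⊗b⊗c ↦ b⊗a⊗c`. -/
def perm213 : V ⊗[k] (V ⊗[k] V) ≃ₐ[k] V ⊗[k] (V ⊗[k] V) := swap12 k V

/-- `X ↦ X₁₃₂`: `a⊗b⊗c ↦ a⊗c⊗b`. -/
def perm132 : V ⊗[k] (V ⊗[k] V) ≃ₐ[k] V ⊗[k] (V ⊗[k] V) := swap23 k V

/-- `X ↦ X₂₃₁`: `a⊗b⊗c ↦ c⊗a⊗b`. -/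
def perm231 : V ⊗[k] (V ⊗[k] V) ≃ₐ[k] V ⊗[k] (V ⊗[k] V) := (swap23 k V).trans (swap12 k V)

/-- `X ↦ X₃₁₂`: `a⊗b⊗c ↦ b⊗c⊗a`. -/
def perm312 : V ⊗[k] (V ⊗[k] V) ≃ₐ[k] V ⊗[k] (V ⊗[k] V) := (swap12 k V).trans (swap23 k V)

/-- `R ↦ R₁₂ : V^⊗2 → V^⊗3`, `a⊗b ↦ a⊗b⊗1`. -/
def emb12 : V ⊗[k] V →ₐ[k] V ⊗[k] (V ⊗[k] V) :=
  Algebra.TensorProduct.map (AlgHom.id k V)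
    (Algebra.TensorProduct.includeLeft : V →ₐ[k] V ⊗[k] V)

/-- `R ↦ R₁₃ : V^⊗2 → V^⊗3`, `a⊗b ↦ a⊗1⊗b`. -/
def emb13 : V ⊗[k] V →ₐ[k] V ⊗[k] (V ⊗[k] V) :=
  Algebra.TensorProduct.map (AlgHom.id k V)
    (Algebra.TensorProduct.includeRight : V →ₐ[k] V ⊗[k] V)

/-- `R ↦ R₂₃ : V^⊗2 → V^⊗3`, `a⊗b ↦ 1⊗a⊗b`. -/
def emb23 : V ⊗[k] V →ₐ[k] V ⊗[k] (V ⊗[k] V) :=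
  Algebra.TensorProduct.includeRight

/-- `Δ ⊗ 1 : V^⊗2 → V^⊗3`. -/
def deltaLeft (Δ : V →ₐ[k] V ⊗[k] V) : V ⊗[k] V →ₐ[k] V ⊗[k] (V ⊗[k] V) :=
  (Algebra.TensorProduct.assoc k k k V V V).toAlgHom.comp
    (Algebra.TensorProduct.map Δ (AlgHom.id k V))

/-- `1 ⊗ Δ : V^⊗2 → V^⊗3`. -/
def deltaRight (Δ : V →ₐ[k] V ⊗[k] V) : V ⊗[k] V →ₐ[k] V ⊗[k] (V ⊗[k] V) :=
  Algebra.TensorProduct.map (AlgHom.id k V) Δ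

/-!
Apply to the first hexagon the transposition `σ₁₂` and the reversal `σ₁₃ : a⊗b⊗c ↦ c⊗b⊗a`.
Because `Δᵒᵖ = R Δ R⁻¹`, `σ₁₂` turns `(Δ⊗1)(R)` into `R₁₂ (Δ⊗1)(R) R₁₂⁻¹`, while `σ₁₃` turns it
into `R₂₃ (1⊗Δ)(R₂₁) R₂₃⁻¹`, and `R₂₁ = R⁻¹` by triangularity. Eliminating `(Δ⊗1)(R)` and `Φ₃₂₁`
from the three resulting identities is a computation in the unit group of `V^⊗3` whose outcome
is the second hexagon.
-/

/-- `X ↦ X₃₂₁`: `a⊗b⊗c ↦ c⊗b⊗a`. -/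
def perm321 : V ⊗[k] (V ⊗[k] V) ≃ₐ[k] V ⊗[k] (V ⊗[k] V) :=
  (swap23 k V).trans ((swap12 k V).trans (swap23 k V))

theorem Algebra.TensorProduct.algHom_ext_threefold {R A B C D : Type*} [CommSemiring R]
    [Semiring A] [Algebra R A] [Semiring B] [Algebra R B] [Semiring C] [Algebra R C]
    [Semiring D] [Algebra R D] {f g : A ⊗[R] (B ⊗[R] C) →ₐ[R] D}
    (h : ∀ a b c, f (a ⊗ₜ (b ⊗ₜ c)) = g (a ⊗ₜ (b ⊗ₜ c))) : f = g :=
  AlgHom.toLinearMap_injective (TensorProduct.ext_threefold' h)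

open Algebra.TensorProduct (assoc comm ext' algHom_ext_threefold includeLeft tmul_mul_tmul)

section

variable {k V}

@[simp] theorem swap12_tmul (a b c : V) : swap12 k V (a ⊗ₜ (b ⊗ₜ c)) = b ⊗ₜ (a ⊗ₜ c) := by
  simp [swap12]

@[simp] theorem swap23_tmul (a b c : V) : swap23 k V (a ⊗ₜ (b ⊗ₜ c)) = a ⊗ₜ (c ⊗ₜ b) := by
  simp [swap23]

@[simp] theorem perm213_tmul (a b c : V) : perm213 k V (a ⊗ₜ (b ⊗ₜ c)) = b ⊗ₜ (a ⊗ₜ c) :=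
  swap12_tmul a b c

@[simp] theorem perm132_tmul (a b c : V) : perm132 k V (a ⊗ₜ (b ⊗ₜ c)) = a ⊗ₜ (c ⊗ₜ b) :=
  swap23_tmul a b c

@[simp] theorem perm231_tmul (a b c : V) : perm231 k V (a ⊗ₜ (b ⊗ₜ c)) = c ⊗ₜ (a ⊗ₜ b) := by
  simp [perm231]

@[simp] theorem perm312_tmul (a b c : V) : perm312 k V (a ⊗ₜ (b ⊗ₜ c)) = b ⊗ₜ (c ⊗ₜ a) := by
  simp [perm312]

@[simp] theorem perm321_tmul (a b c : V) : perm321 k V (a ⊗ₜ (b ⊗ₜ c)) = c ⊗ₜ (b ⊗ₜ a) := by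
  simp [perm321]

@[simp] theorem emb12_tmul (a b : V) : emb12 k V (a ⊗ₜ b) = a ⊗ₜ (b ⊗ₜ (1 : V)) := rfl

@[simp] theorem emb13_tmul (a b : V) : emb13 k V (a ⊗ₜ b) = a ⊗ₜ ((1 : V) ⊗ₜ b) := rfl

@[simp] theorem emb23_tmul (a b : V) : emb23 k V (a ⊗ₜ b) = (1 : V) ⊗ₜ (a ⊗ₜ b) := rfl

theorem perm213_perm312 (X : V ⊗[k] (V ⊗[k] V)) : perm213 k V (perm312 k V X) = perm321 k V X :=
  DFunLike.congr_fun (algHom_ext_threefold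
    (f := ((perm312 k V).trans (perm213 k V)).toAlgHom)
    (g := (perm321 k V).toAlgHom) fun a b c => by simp) X

theorem perm213_perm132 (X : V ⊗[k] (V ⊗[k] V)) : perm213 k V (perm132 k V X) = perm231 k V X :=
  DFunLike.congr_fun (algHom_ext_threefold
    (f := ((perm132 k V).trans (perm213 k V)).toAlgHom)
    (g := (perm231 k V).toAlgHom) fun a b c => by simp) X

theorem perm321_perm312 (X : V ⊗[k] (V ⊗[k] V)) : perm321 k V (perm312 k V X) = perm132 k V X :=
  DFunLike.congr_fun (algHom_ext_threefold
    (f := ((perm312 k V).trans (perm321 k V)).toAlgHom)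
    (g := (perm132 k V).toAlgHom) fun a b c => by simp) X

theorem perm321_perm132 (X : V ⊗[k] (V ⊗[k] V)) : perm321 k V (perm132 k V X) = perm312 k V X :=
  DFunLike.congr_fun (algHom_ext_threefold
    (f := ((perm132 k V).trans (perm321 k V)).toAlgHom)
    (g := (perm312 k V).toAlgHom) fun a b c => by simp) X

theorem perm213_emb13 (z : V ⊗[k] V) : perm213 k V (emb13 k V z) = emb23 k V z :=
  DFunLike.congr_fun (ext' (g := (perm213 k V).toAlgHom.comp (emb13 k V))
    (h := emb23 k V) fun a b => by simp) z

theorem perm213_emb23 (z : V ⊗[k] V) : perm213 k V (emb23 k V z) = emb13 k V z :=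
  DFunLike.congr_fun (ext' (g := (perm213 k V).toAlgHom.comp (emb23 k V))
    (h := emb13 k V) fun a b => by simp) z

theorem perm321_emb13 (z : V ⊗[k] V) : perm321 k V (emb13 k V z) = emb13 k V (comm k V V z) :=
  DFunLike.congr_fun (ext' (g := (perm321 k V).toAlgHom.comp (emb13 k V))
    (h := (emb13 k V).comp (comm k V V).toAlgHom) fun a b => by simp) z

theorem perm321_emb23 (z : V ⊗[k] V) : perm321 k V (emb23 k V z) = emb12 k V (comm k V V z) :=
  DFunLike.congr_fun (ext' (g := (perm321 k V).toAlgHom.comp (emb23 k V))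
    (h := (emb12 k V).comp (comm k V V).toAlgHom) fun a b => by simp) z

theorem assoc_tmul_one (z : V ⊗[k] V) : assoc k k k V V V (z ⊗ₜ (1 : V)) = emb12 k V z :=
  DFunLike.congr_fun (ext'
    (g := (assoc k k k V V V).toAlgHom.comp includeLeft)
    (h := emb12 k V) fun a b => by simp) z

theorem perm321_assoc_tmul (w : V ⊗[k] V) (c : V) :
    perm321 k V (assoc k k k V V V (w ⊗ₜ c)) = c ⊗ₜ comm k V V w := by
  induction w using TensorProduct.induction_on with
  | zero => simp
  | add x y hx hy => simp only [TensorProduct.add_tmul, TensorProduct.tmul_add, map_add, hx, hy]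
  | tmul a b => simp

theorem perm213_deltaLeft (Δ : V →ₐ[k] V ⊗[k] V) (x : V ⊗[k] V) :
    perm213 k V (deltaLeft k V Δ x) = deltaLeft k V ((comm k V V).toAlgHom.comp Δ) x :=
  DFunLike.congr_fun (ext'
    (g := (perm213 k V).toAlgHom.comp (deltaLeft k V Δ))
    (h := deltaLeft k V ((comm k V V).toAlgHom.comp Δ))
    fun a b => by simp [perm213, swap12, deltaLeft]) x

theorem perm321_deltaLeft (Δ : V →ₐ[k] V ⊗[k] V) (x : V ⊗[k] V) :
    perm321 k V (deltaLeft k V Δ x) =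
      deltaRight k V ((comm k V V).toAlgHom.comp Δ) (comm k V V x) :=
  DFunLike.congr_fun (ext'
    (g := (perm321 k V).toAlgHom.comp (deltaLeft k V Δ))
    (h := (deltaRight k V ((comm k V V).toAlgHom.comp Δ)).comp (comm k V V).toAlgHom)
    fun a b => by simp [deltaLeft, deltaRight, perm321_assoc_tmul]) x

theorem deltaLeft_eq_of_conj {Δ Δ' : V →ₐ[k] V ⊗[k] V} {u u' : V ⊗[k] V}
    (h : ∀ v, Δ' v = u * Δ v * u') (x : V ⊗[k] V) :
    deltaLeft k V Δ' x = emb12 k V u * deltaLeft k V Δ x * emb12 k V u' := by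
  induction x using TensorProduct.induction_on with
  | zero => simp
  | add x y hx hy => simp only [map_add, hx, hy, mul_add, add_mul]
  | tmul a b =>
    have hsplit : (u * Δ a * u') ⊗ₜ[k] b = (u ⊗ₜ 1) * (Δ a ⊗ₜ b) * (u' ⊗ₜ (1 : V)) := by
      simp [tmul_mul_tmul]
    simp only [deltaLeft, AlgHom.comp_apply, Algebra.TensorProduct.map_tmul, AlgHom.id_apply, h,
      hsplit, map_mul]
    simp [assoc_tmul_one]

theorem deltaRight_eq_of_conj {Δ Δ' : V →ₐ[k] V ⊗[k] V} {u u' : V ⊗[k] V}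
    (h : ∀ v, Δ' v = u * Δ v * u') (x : V ⊗[k] V) :
    deltaRight k V Δ' x = emb23 k V u * deltaRight k V Δ x * emb23 k V u' := by
  induction x using TensorProduct.induction_on with
  | zero => simp
  | add x y hx hy => simp only [map_add, hx, hy, mul_add, add_mul]
  | tmul a b => simp [deltaRight, emb23, h, tmul_mul_tmul]

end

theorem eq_of_hexagon_conjugates {G : Type*} [Group G]
    {D E r₁₂ r₁₃ r₂₃ φ φ₁₃₂ φ₂₁₃ φ₂₃₁ φ₃₁₂ φ₃₂₁ : G}
    (hD : D = φ₃₁₂ * r₁₃ * φ₁₃₂⁻¹ * r₂₃ * φ)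
    (h₂₁₃ : r₁₂ * D * r₁₂⁻¹ = φ₃₂₁ * r₂₃ * φ₂₃₁⁻¹ * r₁₃ * φ₂₁₃)
    (h₃₂₁ : r₂₃ * E⁻¹ * r₂₃⁻¹ = φ₁₃₂ * r₁₃⁻¹ * φ₃₁₂⁻¹ * r₁₂⁻¹ * φ₃₂₁) :
    E = φ₂₃₁⁻¹ * r₁₃ * φ₂₁₃ * r₁₂ * φ⁻¹ := by
  have hφ₃₂₁ : φ₃₂₁ = r₁₂ * D * r₁₂⁻¹ * (r₂₃ * φ₂₃₁⁻¹ * r₁₃ * φ₂₁₃)⁻¹ := by rw [h₂₁₃]; group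
  have hE : E = (r₂₃⁻¹ * (φ₁₃₂ * r₁₃⁻¹ * φ₃₁₂⁻¹ * r₁₂⁻¹ * φ₃₂₁) * r₂₃)⁻¹ := by rw [← h₃₂₁]; group
  rw [hE, hφ₃₂₁, hD]
  group

/-- Let `V` be a unital algebra with an algebra map `Δ : V → V⊗V` and an
invertible `R ∈ V⊗V` satisfying `Δᵒᵖ(v) = R·Δ(v)·R⁻¹` and the triangularity
`R₂₁·R = 1`.  If `Φ ∈ V^⊗3` is invertible and satisfies the first hexagon
identity `(Δ⊗1)(R) = Φ₃₁₂·R₁₃·Φ₁₃₂⁻¹·R₂₃·Φ`, then the second hexagon identity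
`(1⊗Δ)(R) = Φ₂₃₁⁻¹·R₁₃·Φ₂₁₃·R₁₂·Φ⁻¹` holds. -/
theorem second_hexagon_of_first (Δ : V →ₐ[k] V ⊗[k] V)
    (R Rinv : V ⊗[k] V) (Φ Ψ : V ⊗[k] (V ⊗[k] V))
    (hR : R * Rinv = 1) (hR' : Rinv * R = 1)
    (hΦ : Φ * Ψ = 1) (hΨ : Ψ * Φ = 1)
    (hop : ∀ v : V, Algebra.TensorProduct.comm k V V (Δ v) = R * Δ v * Rinv)
    (htri : Algebra.TensorProduct.comm k V V R * R = 1)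
    (hhex1 : deltaLeft k V Δ R =
      perm312 k V Φ * emb13 k V R * perm132 k V Ψ * emb23 k V R * Φ) :
    deltaRight k V Δ R =
      perm231 k V Ψ * emb13 k V R * perm213 k V Φ * emb12 k V R * Ψ := by
  have hR₂₁ : comm k V V R = Rinv :=
    calc comm k V V R = comm k V V R * (R * Rinv) := by rw [hR, mul_one]
      _ = Rinv := by rw [← mul_assoc, htri, one_mul]
  have hconj : ∀ v, ((comm k V V).toAlgHom.comp Δ) v = R * Δ v * Rinv := hop
  have h₂₁₃ := congrArg (perm213 k V) hhex1
  rw [perm213_deltaLeft, deltaLeft_eq_of_conj hconj] at h₂₁₃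
  simp only [map_mul, perm213_perm312, perm213_emb13, perm213_perm132, perm213_emb23] at h₂₁₃
  have h₃₂₁ := congrArg (perm321 k V) hhex1
  rw [perm321_deltaLeft, hR₂₁, deltaRight_eq_of_conj hconj] at h₃₂₁
  simp only [map_mul, perm321_perm312, perm321_emb13, perm321_perm132, perm321_emb23,
    hR₂₁] at h₃₂₁
  obtain ⟨uR, rfl, rfl⟩ : ∃ u : (V ⊗[k] V)ˣ, ↑u = R ∧ ↑u⁻¹ = Rinv :=
    ⟨⟨R, Rinv, hR, hR'⟩, rfl, rfl⟩
  obtain ⟨uΦ, rfl, rfl⟩ : ∃ u : (V ⊗[k] (V ⊗[k] V))ˣ, ↑u = Φ ∧ ↑u⁻¹ = Ψ :=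
    ⟨⟨Φ, Ψ, hΦ, hΨ⟩, rfl, rfl⟩
  have h := eq_of_hexagon_conjugates
    (D := Units.map (deltaLeft k V Δ : _ →* _) uR) (E := Units.map (deltaRight k V Δ : _ →* _) uR)
    (r₁₂ := Units.map (emb12 k V : _ →* _) uR) (r₁₃ := Units.map (emb13 k V : _ →* _) uR)
    (r₂₃ := Units.map (emb23 k V : _ →* _) uR) (φ := uΦ)
    (φ₁₃₂ := Units.map (perm132 k V : _ →* _) uΦ) (φ₂₁₃ := Units.map (perm213 k V : _ →* _) uΦ)
    (φ₂₃₁ := Units.map (perm231 k V : _ →* _) uΦ) (φ₃₁₂ := Units.map (perm312 k V : _ →* _) uΦ)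
    (φ₃₂₁ := Units.map (perm321 k V : _ →* _) uΦ)
    (Units.ext (by simpa using hhex1)) (Units.ext (by simpa using h₂₁₃))
    (Units.ext (by simpa using h₃₂₁))
  simpa using congrArg Units.val h
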